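/- Let (K,ν) be a real closed valued field, L = K(x₁,…,xₙ), p₁,…,p_m ∈ K[x₁,…,xₙ] with S_p̄ nonempty, and let A_p̄ be the O_ν-subalgebra of L generated by I_p̄ = {1/(1+f) : f ∈ Cone({p₁,…,p_m})}. Let ν̃ be any valuation on L extending ν such that A_p̄ ⊆ O_ν̃. Then there exists a linear order ≤_L on L which is compatible with ν̃ and satisfies p_i ≥_L 0 for every 1 ≤ i ≤ m. -/

import Mathlib

universe u v w

open MvPolynomial

/-- A (linear) field ordering, given by its cone of non-negative elements.
This is equivalent to a linear order making the field an ordered field. -/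
structure FieldOrdering (L : Type*) [Field L] where
  P : Set L
  add_mem : ∀ x ∈ P, ∀ y ∈ P, x + y ∈ P
  mul_mem : ∀ x ∈ P, ∀ y ∈ P, x * y ∈ P
  square_mem : ∀ x : L, x * x ∈ P
  neg_one_not_mem : (-1 : L) ∉ P
  total : ∀ x : L, x ∈ P ∨ -x ∈ P

/-- `x >_L 0` for a field ordering. -/
def FieldOrdering.Pos {L : Type*} [Field L] (O : FieldOrdering L) (x : L) : Prop :=
  x ∈ O.P ∧ x ≠ 0

/-- An ordering on a valued field is compatible with the (multiplicative) valuation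
if `0 < x < y` implies `w x ≤ w y` (i.e. the additive valuation of `x` is at least
that of `y`); equivalently, the valuation ring is convex. -/
def FieldOrdering.IsCompatible {L : Type*} [Field L] {Γ : Type*}
    [LinearOrderedCommGroupWithZero Γ] (O : FieldOrdering L) (w : Valuation L Γ) : Prop :=
  ∀ x y : L, O.Pos x → O.Pos (y - x) → w x ≤ w y

/-- A field `K` is real closed: every nonnegative element is a square and every
polynomial of odd degree has a root. -/
def IsRealClosedField (K : Type*) [Field K] [LinearOrder K] [IsStrictOrderedRing K] : Prop :=
  (∀ x : K, 0 ≤ x → ∃ y : K, y * y = x) ∧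
    ∀ p : Polynomial K, Odd p.natDegree → ∃ x : K, p.IsRoot x

/-- `(K, ≤, ν)` is a real closed valued field: `K` is real closed and the
valuation ring of `ν` is convex (`0 < x < y → ν x ≤ ν y` multiplicatively). -/
def IsRCVF {K : Type*} [Field K] [LinearOrder K] [IsStrictOrderedRing K] {Γ₀ : Type*}
    [LinearOrderedCommGroupWithZero Γ₀] (ν : Valuation K Γ₀) : Prop :=
  IsRealClosedField K ∧ ∀ x y : K, 0 < x → x < y → ν x ≤ ν y

/-- The field of rational functions in `n` variables over `K`. -/
abbrev RatFuncField (K : Type u) [Field K] (n : ℕ) : Type u :=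
  FractionRing (MvPolynomial (Fin n) K)

/-- `f = q/r` with `r b ≠ 0` and `v = q b / r b`; i.e. `f` is defined at `b` with value `v`. -/
def HasEvalAt {K : Type u} [Field K] {n : ℕ} (f : RatFuncField K n) (b : Fin n → K) (v : K) :
    Prop :=
  ∃ q r : MvPolynomial (Fin n) K, eval b r ≠ 0 ∧
    f = algebraMap (MvPolynomial (Fin n) K) (RatFuncField K n) q /
      algebraMap (MvPolynomial (Fin n) K) (RatFuncField K n) r ∧
    v = eval b q / eval b r

/-- `f` is defined at `b`. -/
def IsDefinedAt {K : Type u} [Field K] {n : ℕ} (f : RatFuncField K n) (b : Fin n → K) : Prop :=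
  ∃ v : K, HasEvalAt f b v

/-- A valuation `w` on an extension field extends `ν` if the valuation ring of `w`
intersected with `K` is the valuation ring of `ν`. -/
def ValExtends {K L : Type*} [Field K] [Field L] [Algebra K L] {Γ₀ Γ : Type*}
    [LinearOrderedCommGroupWithZero Γ₀] [LinearOrderedCommGroupWithZero Γ]
    (ν : Valuation K Γ₀) (w : Valuation L Γ) : Prop :=
  ∀ a : K, w (algebraMap K L a) ≤ 1 ↔ ν a ≤ 1

/-- An OVF-valuation on `L` (over `(K,ν)`): a valuation extending `ν` admitting a
compatible field ordering. -/
def IsOVFValuation {K L : Type*} [Field K] [Field L] [Algebra K L] {Γ₀ Γ : Type*}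
    [LinearOrderedCommGroupWithZero Γ₀] [LinearOrderedCommGroupWithZero Γ]
    (ν : Valuation K Γ₀) (w : Valuation L Γ) : Prop :=
  ValExtends ν w ∧ ∃ O : FieldOrdering L, O.IsCompatible w

/-- A valuation on `K(x₁,…,xₙ)` is near `b ∈ Kⁿ` if every rational function defined
at `b` and vanishing at `b` has valuation above every element of the value group of `K`
(multiplicatively: `w f < w a` for every nonzero `a ∈ K`). -/
def IsNear {K : Type u} [Field K] {n : ℕ} {Γ : Type*} [LinearOrderedCommGroupWithZero Γ]
    (w : Valuation (RatFuncField K n) Γ) (b : Fin n → K) : Prop :=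
  ∀ f : RatFuncField K n, HasEvalAt f b 0 →
    ∀ a : K, a ≠ 0 → w f < w (algebraMap K (RatFuncField K n) a)

/-- `f` is OVF-integral at `b`: every OVF-valuation near `b` takes `f` into its
valuation ring. -/
def IsOVFIntegralAt {K : Type u} [Field K] {Γ₀ : Type v} [LinearOrderedCommGroupWithZero Γ₀]
    {n : ℕ} (ν : Valuation K Γ₀) (f : RatFuncField K n) (b : Fin n → K) : Prop :=
  ∀ (Γ : Type w) (_ : LinearOrderedCommGroupWithZero Γ)
    (wb : Valuation (RatFuncField K n) Γ),
    IsOVFValuation ν wb → IsNear wb b → wb f ≤ 1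

/-- `Cone P`: the smallest subset of `L` containing `P` and all squares of nonzero
elements which is closed under addition and multiplication. -/
inductive InCone {L : Type*} [Field L] (P : Set L) : L → Prop
  | mem : ∀ x ∈ P, InCone P x
  | sq : ∀ x : L, x ≠ 0 → InCone P (x * x)
  | add : ∀ x y : L, InCone P x → InCone P y → InCone P (x + y)
  | mul : ∀ x y : L, InCone P x → InCone P y → InCone P (x * y)

/-- The open semi-algebraic set `S_p̄ = {b | p_i(b) > 0 for all i}`. -/
def SetSP {K : Type u} [Field K] [LinearOrder K] [IsStrictOrderedRing K] {n m : ℕ}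
    (p : Fin m → MvPolynomial (Fin n) K) : Set (Fin n → K) :=
  {b | ∀ i, 0 < eval b (p i)}

/-- The set `I_p̄ = { 1/(1+f) : f ∈ Cone({p₁,…,p_m}) }` inside `K(x₁,…,xₙ)`. -/
def SetIP {K : Type u} [Field K] {n m : ℕ} (p : Fin m → MvPolynomial (Fin n) K) :
    Set (RatFuncField K n) :=
  {g | ∃ f : RatFuncField K n,
    InCone (Set.range fun i => algebraMap (MvPolynomial (Fin n) K) (RatFuncField K n) (p i)) f ∧
    g = (1 + f)⁻¹}

/-- The `O_ν`-subalgebra of `K(x₁,…,xₙ)` generated by a set `I` (as a subring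
generated by `I` together with the image of `O_ν`). -/
noncomputable def OAlgebraGen {K : Type u} [Field K] {Γ₀ : Type v} [LinearOrderedCommGroupWithZero Γ₀]
    (ν : Valuation K Γ₀) {n : ℕ} (I : Set (RatFuncField K n)) : Subring (RatFuncField K n) :=
  Subring.closure ((algebraMap K (RatFuncField K n) '' {a : K | ν a ≤ 1}) ∪ I)



/-- The multiplicative set `T = {1 + m·a : m ∈ M_ν, a ∈ A}` used for the integral radical. -/
def SetT {K : Type u} [Field K] {Γ₀ : Type v} [LinearOrderedCommGroupWithZero Γ₀]
    (ν : Valuation K Γ₀) {n : ℕ} (A : Subring (RatFuncField K n)) :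
    Set (RatFuncField K n) :=
  {t | ∃ m : K, ν m < 1 ∧ ∃ a ∈ A, t = 1 + algebraMap K (RatFuncField K n) m * a}

/-- The localization `A_T` of `A` at `T`, realized inside `L` as the subring generated
by `A` together with the inverses of the elements of `T`. -/
noncomputable def LocAT {K : Type u} [Field K] {n : ℕ}
    (A : Subring (RatFuncField K n)) (T : Set (RatFuncField K n)) :
    Subring (RatFuncField K n) :=
  Subring.closure ((A : Set (RatFuncField K n)) ∪ ((fun t => t⁻¹) '' T))

/-- The integral radical of `A`: the integral closure in `L` of the localization `A_T`. -/
noncomputable def IntegralRadical {K : Type u} [Field K] {Γ₀ : Type v}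
    [LinearOrderedCommGroupWithZero Γ₀] (ν : Valuation K Γ₀) {n : ℕ}
    (A : Subring (RatFuncField K n)) : Set (RatFuncField K n) :=
  (integralClosure (LocAT A (SetT ν A)) (RatFuncField K n) :
    Subalgebra (LocAT A (SetT ν A)) (RatFuncField K n))

/-- A semi-section of a valued field `(L, μ)` (with `μ` surjective, so that the nonzero
elements of `Γ` form the value group): a map `s : Γ → L` with `μ (s γ) = γ` such that
`s (γ₁γ₂) / (s γ₁ · s γ₂)` is always a square. -/
def IsSemiSection {L : Type*} [Field L] {Γ : Type*} [LinearOrderedCommGroupWithZero Γ]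
    (μ : Valuation L Γ) (s : Γ → L) : Prop :=
  (∀ γ : Γ, γ ≠ 0 → μ (s γ) = γ) ∧
    ∀ γ₁ γ₂ : Γ, γ₁ ≠ 0 → γ₂ ≠ 0 →
      ∃ c : L, c ≠ 0 ∧ s (γ₁ * γ₂) = s γ₁ * s γ₂ * (c * c)

/-- `y ∈ O_μ` and its residue is `>_ℓ 0` for the given ordering of the residue field. -/
def ResPos {L : Type*} [Field L] {Γ : Type*} [LinearOrderedCommGroupWithZero Γ]
    (μ : Valuation L Γ)
    (Oℓ : FieldOrdering (IsLocalRing.ResidueField μ.valuationSubring)) (y : L) : Prop :=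
  ∃ u : μ.valuationSubring, (u : L) = y ∧
    Oℓ.Pos (IsLocalRing.residue (μ.valuationSubring) u)

/-- An ordering `OL` of `L` induces the ordering `Oℓ` of the residue field:
positive units of the valuation ring have positive residue. -/
def OrderingInduces {L : Type*} [Field L] {Γ : Type*} [LinearOrderedCommGroupWithZero Γ]
    (μ : Valuation L Γ) (OL : FieldOrdering L)
    (Oℓ : FieldOrdering (IsLocalRing.ResidueField μ.valuationSubring)) : Prop :=
  ∀ u : μ.valuationSubring, μ (u : L) = 1 → OL.Pos (u : L) →
    Oℓ.Pos (IsLocalRing.residue (μ.valuationSubring) u)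

/-- The set `S_{p̄,ḡ}`: points where all `p_i` are positive and all `g_j` are defined
with value in the valuation ring. -/
def SetSPG {K : Type u} [Field K] [LinearOrder K] [IsStrictOrderedRing K] {Γ₀ : Type v}
    [LinearOrderedCommGroupWithZero Γ₀] (ν : Valuation K Γ₀) {n m l : ℕ}
    (p : Fin m → MvPolynomial (Fin n) K) (g : Fin l → RatFuncField K n) :
    Set (Fin n → K) :=
  {b | (∀ i, 0 < eval b (p i)) ∧ ∀ j, ∃ v : K, HasEvalAt (g j) b v ∧ ν v ≤ 1}

/-!
A point `b` at which all `pᵢ` are positive shows that `-1 ∉ Cone(p̄)`: every element of the cone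
is `≥ 0` near `b`. Since `1 / (1 + f) ∈ O_ν̃` for `f` in the cone, `ν̃` is monotone on the cone,
`ν̃ F ≤ ν̃ (F + G)`, by writing `F + G = F (1 + G / F)`. Hence `Cone(p̄) · (1 + 𝔪_ν̃)` is closed
under addition as well as multiplication and avoids `-1`: it is a preordering. A maximal
preordering containing it is an ordering, and an ordering in which `1 + 𝔪_ν̃` is positive is
compatible with `ν̃`.
-/

open Filter Topology

namespace RingPreordering

variable {R : Type*} [CommRing R]

theorem exists_neg_one_eq_add_mul_of_isMax {P : RingPreordering R} (hP : IsMax P) {x : R}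
    (hx : x ∉ P) : ∃ a ∈ P, ∃ b ∈ P, -1 = a + x * b := by
  by_contra! h
  let Q : RingPreordering R := .mk' {t | ∃ a ∈ P, ∃ b ∈ P, t = a + x * b}
    (by
      rintro _ _ ⟨a, ha, b, hb, rfl⟩ ⟨a', ha', b', hb', rfl⟩
      exact ⟨a + a', add_mem ha ha', b + b', add_mem hb hb', by ring⟩)
    (by
      rintro _ _ ⟨a, ha, b, hb, rfl⟩ ⟨a', ha', b', hb', rfl⟩
      refine ⟨a * a' + x * x * (b * b'), add_mem (mul_mem ha ha')
          (mul_mem (P.mul_self_mem x) (mul_mem hb hb')),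
        a * b' + a' * b, add_mem (mul_mem ha hb') (mul_mem ha' hb), by ring⟩)
    (fun y => ⟨y * y, P.mul_self_mem y, 0, zero_mem P, by ring⟩)
    (fun ⟨a, ha, b, hb, hab⟩ => h a ha b hb hab)
  have hPQ : P ≤ Q := fun t ht => ⟨t, ht, 0, zero_mem P, by ring⟩
  exact hx (hP hPQ ⟨0, zero_mem P, 1, one_mem P, by ring⟩)

theorem hasMemOrNegMem_of_isMax {P : RingPreordering R} (hP : IsMax P) : HasMemOrNegMem P := by
  refine ⟨fun x => ?_⟩
  by_contra! hx
  obtain ⟨a, ha, b, hb, hab⟩ := exists_neg_one_eq_add_mul_of_isMax hP hx.1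
  obtain ⟨c, hc, d, hd, hcd⟩ := exists_neg_one_eq_add_mul_of_isMax hP hx.2
  -- `(1 + a) (1 + c) = -x² b d`
  have h : -1 = a + c + a * c + x * x * (b * d) := by
    linear_combination (1 + c) * hab - x * b * hcd
  exact P.neg_one_notMem (h ▸ add_mem (add_mem (add_mem ha hc) (mul_mem ha hc))
    (mul_mem (P.mul_self_mem x) (mul_mem hb hd)))

theorem exists_le_hasMemOrNegMem (P : RingPreordering R) :
    ∃ Q : RingPreordering R, P ≤ Q ∧ HasMemOrNegMem Q := by
  obtain ⟨Q, hPQ, hQ⟩ := zorn_le_nonempty_Ici₀ P (fun c _ hc Q₀ hQ₀ => by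
    have mem_union {x : R} : x ∈ ⋃ Q ∈ c, (Q : Set R) ↔ ∃ Q ∈ c, x ∈ Q := by simp
    refine ⟨.mk' (⋃ Q ∈ c, (Q : Set R)) ?_ ?_ ?_ ?_, fun Q hQ x hx => mem_union.2 ⟨Q, hQ, hx⟩⟩
    · simp only [mem_union]
      rintro x y ⟨Q₁, hQ₁, hx⟩ ⟨Q₂, hQ₂, hy⟩
      obtain ⟨Q, hQ, h₁, h₂⟩ := hc.directedOn Q₁ hQ₁ Q₂ hQ₂
      exact ⟨Q, hQ, add_mem (h₁ hx) (h₂ hy)⟩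
    · simp only [mem_union]
      rintro x y ⟨Q₁, hQ₁, hx⟩ ⟨Q₂, hQ₂, hy⟩
      obtain ⟨Q, hQ, h₁, h₂⟩ := hc.directedOn Q₁ hQ₁ Q₂ hQ₂
      exact ⟨Q, hQ, mul_mem (h₁ hx) (h₂ hy)⟩
    · exact fun x => mem_union.2 ⟨Q₀, hQ₀, Q₀.mul_self_mem x⟩
    · simp only [mem_union]
      rintro ⟨Q, -, hQ⟩
      exact Q.neg_one_notMem hQ) P le_rfl
  exact ⟨Q, hPQ, hasMemOrNegMem_of_isMax hQ⟩

end RingPreordering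

theorem MvPolynomial.eq_zero_of_eventually_eval_eq_zero {R σ : Type*} [CommRing R] [IsDomain R]
    [TopologicalSpace R] [T1Space R] [∀ x : R, (𝓝[≠] x).NeBot] {p : MvPolynomial σ R}
    {b : σ → R} (h : ∀ᶠ x in 𝓝 b, eval x p = 0) : p = 0 := by
  obtain ⟨I, t, ht, hsub⟩ := Filter.mem_pi'.1 (nhds_pi (a := b) ▸ h)
  refine funext_set t (fun i => infinite_of_mem_nhds (b i) (ht i)) fun x hx => ?_
  simpa using (hsub fun i _ => hx i trivial : x ∈ {x | eval x p = 0})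

section NonnegNear

variable {K σ : Type*} [Field K] [LinearOrder K] [IsStrictOrderedRing K] [TopologicalSpace K]

def IsNonnegNear (b : σ → K) (f : FractionRing (MvPolynomial σ K)) : Prop :=
  ∃ q r : MvPolynomial σ K, r ≠ 0 ∧
    f = algebraMap _ _ q / algebraMap _ _ r ∧ ∀ᶠ x in 𝓝 b, 0 ≤ eval x q * eval x r

variable {b : σ → K}

theorem isNonnegNear_algebraMap [OrderTopology K] {q : MvPolynomial σ K} (hq : 0 < eval b q) :
    IsNonnegNear b (algebraMap _ _ q) :=
  ⟨q, 1, one_ne_zero, by simp, by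
    filter_upwards [(continuous_eval q).continuousAt.eventually (lt_mem_nhds hq)] with x hx
    simpa using hx.le⟩

theorem isNonnegNear_mul_self {f : FractionRing (MvPolynomial σ K)} :
    IsNonnegNear b (f * f) := by
  obtain ⟨q, r, hr, rfl⟩ := IsFractionRing.div_surjective (A := MvPolynomial σ K) f
  refine ⟨q * q, r * r, mul_ne_zero (nonZeroDivisors.ne_zero hr) (nonZeroDivisors.ne_zero hr),
    by simp only [map_mul]; ring, .of_forall fun x => ?_⟩
  simpa only [map_mul, ← mul_assoc, mul_right_comm _ (eval x r)] using
    mul_self_nonneg (eval x q * eval x r)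

theorem IsNonnegNear.add {f g : FractionRing (MvPolynomial σ K)} (hf : IsNonnegNear b f)
    (hg : IsNonnegNear b g) : IsNonnegNear b (f + g) := by
  obtain ⟨q, r, hr, rfl, hqr⟩ := hf
  obtain ⟨q', r', hr', rfl, hqr'⟩ := hg
  have hι : ∀ {r : MvPolynomial σ K}, r ≠ 0 →
      algebraMap _ (FractionRing (MvPolynomial σ K)) r ≠ 0 :=
    fun hr => (map_ne_zero_iff _ (IsFractionRing.injective _ _)).2 hr
  refine ⟨q * r' + q' * r, r * r', mul_ne_zero hr hr', ?_, ?_⟩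
  · rw [div_add_div _ _ (hι hr) (hι hr')]
    simp only [map_add, map_mul]
    ring
  · filter_upwards [hqr, hqr'] with x hx hx'
    simp only [map_add, map_mul]
    nlinarith [mul_nonneg hx (mul_self_nonneg (eval x r')),
      mul_nonneg hx' (mul_self_nonneg (eval x r))]

theorem IsNonnegNear.mul {f g : FractionRing (MvPolynomial σ K)} (hf : IsNonnegNear b f)
    (hg : IsNonnegNear b g) : IsNonnegNear b (f * g) := by
  obtain ⟨q, r, hr, rfl, hqr⟩ := hf
  obtain ⟨q', r', hr', rfl, hqr'⟩ := hg
  refine ⟨q * q', r * r', mul_ne_zero hr hr', by simp [div_mul_div_comm], ?_⟩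
  filter_upwards [hqr, hqr'] with x hx hx'
  simpa only [map_mul, mul_mul_mul_comm] using mul_nonneg hx hx'

theorem not_isNonnegNear_neg_one [OrderTopology K] :
    ¬ IsNonnegNear b (-1 : FractionRing (MvPolynomial σ K)) := by
  rintro ⟨q, r, hr, h, hqr⟩
  have hq : q = -r := by
    apply IsFractionRing.injective (MvPolynomial σ K) (FractionRing (MvPolynomial σ K))
    rw [eq_div_iff ((map_ne_zero_iff _ (IsFractionRing.injective _ _)).2 hr)] at h
    simpa using h.symm
  refine hr (eq_zero_of_eventually_eval_eq_zero (b := b) ?_)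
  filter_upwards [hqr] with x hx
  rw [hq, map_neg, neg_mul] at hx
  exact mul_self_eq_zero.1 (le_antisymm (neg_nonneg.1 hx) (mul_self_nonneg _))

theorem InCone.isNonnegNear [OrderTopology K] {ι : Type*} {p : ι → MvPolynomial σ K}
    (hb : ∀ i, 0 < eval b (p i)) {f : FractionRing (MvPolynomial σ K)}
    (hf : InCone (Set.range fun i => algebraMap _ (FractionRing _) (p i)) f) :
    IsNonnegNear b f := by
  induction hf with
  | mem x hx => obtain ⟨i, rfl⟩ := hx; exact isNonnegNear_algebraMap (hb i)
  | sq x _ => exact isNonnegNear_mul_self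
  | add x y _ _ hx hy => exact hx.add hy
  | mul x y _ _ hx hy => exact hx.mul hy

theorem not_inCone_neg_one_of_eval_pos [OrderTopology K] {ι : Type*} {p : ι → MvPolynomial σ K}
    (hb : ∀ i, 0 < eval b (p i)) :
    ¬ InCone (Set.range fun i => algebraMap _ (FractionRing (MvPolynomial σ K)) (p i)) (-1) :=
  fun h => not_isNonnegNear_neg_one (h.isNonnegNear hb)

end NonnegNear

section PrincipalUnits

variable {L Γ : Type*} [Field L] [LinearOrderedCommGroupWithZero Γ] {P : Set L}
  {w : Valuation L Γ}

theorem InCone.one : InCone P 1 := by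
  simpa using InCone.sq (P := P) 1 one_ne_zero

theorem InCone.div {f g : L} (hf : InCone P f) (hg : InCone P g) (hg0 : g ≠ 0) :
    InCone P (f / g) := by
  have h : f / g = f * g * (g⁻¹ * g⁻¹) := by field_simp
  exact h ▸ .mul _ _ (.mul _ _ hf hg) (.sq _ (inv_ne_zero hg0))

theorem InCone.one_add_ne_zero (hP : ¬ InCone P (-1)) {f : L} (hf : InCone P f) : 1 + f ≠ 0 :=
  fun h => hP (eq_neg_of_add_eq_zero_right h ▸ hf)

theorem Valuation.le_map_add_of_inCone (hP : ¬ InCone P (-1))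
    (hI : ∀ f, InCone P f → w (1 + f)⁻¹ ≤ 1) {F G : L} (hF : InCone P F) (hG : InCone P G) :
    w F ≤ w (F + G) := by
  rcases eq_or_ne F 0 with rfl | hF0
  · simp
  have hGF : InCone P (G / F) := hG.div hF hF0
  have h1 : 1 ≤ w (1 + G / F) := by
    have hpos : 0 < w (1 + G / F) := by
      simpa [Valuation.pos_iff] using InCone.one_add_ne_zero hP hGF
    simpa [inv_le_one₀ hpos] using hI _ hGF
  calc w F = w F * 1 := (mul_one _).symm
    _ ≤ w F * w (1 + G / F) := by gcongr
    _ = w (F + G) := by rw [← map_mul]; congr 1; field_simp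

/-- `{0} ∪ Cone(P) · (1 + 𝔪_w)`, where `x = F u` with `w (u - 1) < 1` is written as
`w (x - F) < w F`. -/
def coneMulPrincipalUnits (P : Set L) (w : Valuation L Γ) : Set L :=
  {x | x = 0 ∨ ∃ F, InCone P F ∧ w (x - F) < w F}

namespace coneMulPrincipalUnits

theorem mem_of_inCone {x : L} (hx : InCone P x) : x ∈ coneMulPrincipalUnits P w := by
  rcases eq_or_ne x 0 with rfl | hx0
  · exact .inl rfl
  · exact .inr ⟨x, hx, by simpa [Valuation.pos_iff] using hx0⟩

theorem one_add_mem {z : L} (hz : w z < 1) : 1 + z ∈ coneMulPrincipalUnits P w :=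
  .inr ⟨1, .one, by simpa using hz⟩

theorem mul_self_mem (x : L) : x * x ∈ coneMulPrincipalUnits P w := by
  rcases eq_or_ne x 0 with rfl | hx0
  · exact .inl (mul_zero 0)
  · exact mem_of_inCone (.sq x hx0)

theorem mul_mem {x y : L} (hx : x ∈ coneMulPrincipalUnits P w)
    (hy : y ∈ coneMulPrincipalUnits P w) : x * y ∈ coneMulPrincipalUnits P w := by
  rcases hx with rfl | ⟨F, hF, hxF⟩
  · exact .inl (zero_mul y)
  rcases hy with rfl | ⟨G, hG, hyG⟩
  · exact .inl (mul_zero x)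
  refine .inr ⟨F * G, .mul _ _ hF hG, ?_⟩
  have hy : w y = w G := Valuation.map_eq_of_sub_lt _ hyG
  have hG0 : 0 < w G := lt_of_le_of_lt zero_le hyG
  have hF0 : 0 < w F := lt_of_le_of_lt zero_le hxF
  calc w (x * y - F * G) = w ((x - F) * y + F * (y - G)) := by ring_nf
    _ ≤ max (w ((x - F) * y)) (w (F * (y - G))) := w.map_add _ _
    _ < w (F * G) := by
      simp only [map_mul, hy]
      exact max_lt (mul_lt_mul_of_pos_right hxF hG0) (mul_lt_mul_of_pos_left hyG hF0)

theorem add_mem (hP : ¬ InCone P (-1)) (hI : ∀ f, InCone P f → w (1 + f)⁻¹ ≤ 1) {x y : L}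
    (hx : x ∈ coneMulPrincipalUnits P w) (hy : y ∈ coneMulPrincipalUnits P w) :
    x + y ∈ coneMulPrincipalUnits P w := by
  rcases hx with rfl | ⟨F, hF, hxF⟩
  · simpa using hy
  rcases hy with rfl | ⟨G, hG, hyG⟩
  · exact (add_zero x).symm ▸ .inr ⟨F, hF, hxF⟩
  refine .inr ⟨F + G, .add _ _ hF hG, ?_⟩
  calc w (x + y - (F + G)) = w ((x - F) + (y - G)) := by ring_nf
    _ ≤ max (w (x - F)) (w (y - G)) := w.map_add _ _
    _ < max (w F) (w G) := max_lt_max hxF hyG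
    _ ≤ w (F + G) := max_le (w.le_map_add_of_inCone hP hI hF hG)
      (add_comm F G ▸ w.le_map_add_of_inCone hP hI hG hF)

theorem neg_one_not_mem (hP : ¬ InCone P (-1)) (hI : ∀ f, InCone P f → w (1 + f)⁻¹ ≤ 1) :
    (-1 : L) ∉ coneMulPrincipalUnits P w := by
  rintro (h | ⟨F, hF, hF1⟩)
  · exact neg_ne_zero.2 one_ne_zero h
  have h : w (-1 - F) = w (F + 1) := by rw [← Valuation.map_neg]; ring_nf
  exact (h ▸ hF1).not_ge (w.le_map_add_of_inCone hP hI hF .one)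

def toRingPreordering (hP : ¬ InCone P (-1)) (hI : ∀ f, InCone P f → w (1 + f)⁻¹ ≤ 1) :
    RingPreordering L :=
  .mk' (coneMulPrincipalUnits P w) (add_mem hP hI) mul_mem mul_self_mem (neg_one_not_mem hP hI)

end coneMulPrincipalUnits

end PrincipalUnits

def FieldOrdering.ofRingPreordering {L : Type*} [Field L] (Q : RingPreordering L)
    [HasMemOrNegMem Q] : FieldOrdering L where
  P := Q
  add_mem _ hx _ hy := AddMemClass.add_mem hx hy
  mul_mem _ hx _ hy := MulMemClass.mul_mem hx hy
  square_mem := Q.mul_self_mem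
  neg_one_not_mem := Q.neg_one_notMem
  total := HasMemOrNegMem.mem_or_neg_mem Q

theorem FieldOrdering.isCompatible_ofRingPreordering {L Γ : Type*} [Field L]
    [LinearOrderedCommGroupWithZero Γ] {Q : RingPreordering L} [HasMemOrNegMem Q]
    {w : Valuation L Γ} (hQ : ∀ z, w z < 1 → 1 + z ∈ Q) :
    (ofRingPreordering Q).IsCompatible w := by
  rintro x y ⟨hx, hx0⟩ ⟨hyx, hyx0⟩
  by_contra! hlt
  -- otherwise `(y - x) / x` and `1 - y / x` are opposite nonzero elements of `Q`
  have hc : (y - x) * x⁻¹ ∈ Q := MulMemClass.mul_mem hyx (RingPreordering.inv_mem hx)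
  have hnc : -((y - x) * x⁻¹) ∈ Q := by
    have h : -((y - x) * x⁻¹) = 1 + -(y / x) := by field_simp; ring
    refine h ▸ hQ _ ?_
    rw [Valuation.map_neg, map_div₀]
    exact (div_lt_one₀ (lt_of_le_of_lt zero_le hlt)).2 hlt
  exact hyx0 (by simpa [hx0] using RingPreordering.eq_zero_of_mem_of_neg_mem hc hnc)

theorem exists_compatible_ordering_general {K : Type u} [Field K] [LinearOrder K] [IsStrictOrderedRing K] {Γ₀ : Type v}
    [LinearOrderedCommGroupWithZero Γ₀] (ν : Valuation K Γ₀)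
    {n m : ℕ} (p : Fin m → MvPolynomial (Fin n) K) (hS : (SetSP p).Nonempty)
    {Γ : Type w} [LinearOrderedCommGroupWithZero Γ]
    (wt : Valuation (RatFuncField K n) Γ)
    (hA : ∀ x ∈ OAlgebraGen ν (SetIP p), wt x ≤ 1) :
    ∃ OL : FieldOrdering (RatFuncField K n), OL.IsCompatible wt ∧
      ∀ i, algebraMap (MvPolynomial (Fin n) K) (RatFuncField K n) (p i) ∈ OL.P := by
  let _ : TopologicalSpace K := Preorder.topology K
  have : OrderTopology K := ⟨rfl⟩
  obtain ⟨b, hb⟩ := hS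
  set P := Set.range fun i => algebraMap (MvPolynomial (Fin n) K) (RatFuncField K n) (p i)
  have hP : ¬ InCone P (-1) := not_inCone_neg_one_of_eval_pos hb
  have hI : ∀ f, InCone P f → wt (1 + f)⁻¹ ≤ 1 :=
    fun f hf => hA _ (Subring.subset_closure (.inr ⟨f, hf, rfl⟩))
  obtain ⟨Q, hQ, _⟩ := (coneMulPrincipalUnits.toRingPreordering hP hI).exists_le_hasMemOrNegMem
  exact ⟨.ofRingPreordering Q,
    FieldOrdering.isCompatible_ofRingPreordering fun _ hz =>
      hQ (coneMulPrincipalUnits.one_add_mem hz),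
    fun i => hQ (coneMulPrincipalUnits.mem_of_inCone (.mem _ ⟨i, rfl⟩))⟩

/-- If `ν̃` extends `ν` to `L = K(x₁,…,xₙ)` with `A_p̄ ⊆ O_ν̃`, there is an
ordering of `L` compatible with `ν̃` in which all the `p_i` are nonnegative. -/
theorem exists_compatible_ordering {K : Type u} [Field K] [LinearOrder K] [IsStrictOrderedRing K] {Γ₀ : Type v}
    [LinearOrderedCommGroupWithZero Γ₀] (ν : Valuation K Γ₀) (hK : IsRCVF ν)
    {n m : ℕ} (p : Fin m → MvPolynomial (Fin n) K) (hS : (SetSP p).Nonempty)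
    {Γ : Type w} [LinearOrderedCommGroupWithZero Γ]
    (wt : Valuation (RatFuncField K n) Γ) (hext : ValExtends ν wt)
    (hA : ∀ x ∈ OAlgebraGen ν (SetIP p), wt x ≤ 1) :
    ∃ OL : FieldOrdering (RatFuncField K n), OL.IsCompatible wt ∧
      ∀ i, algebraMap (MvPolynomial (Fin n) K) (RatFuncField K n) (p i) ∈ OL.P :=
  exists_compatible_ordering_general ν p hS wt hA
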